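/- arXiv:2109.10813 — 4 statements merged into one kernel-verified Lean document; each statement's English description precedes it below -/
import Mathlib

section
/- Let S and A be finite sets, γ ∈ [0,1), and D a probability distribution over S × A. Let Qᵏ, Qᵏ⁻¹ : S × A → ℝ and suppose f(k+1) = E_{(s,a)∼D}[r(s,a) + γ·E_{s'∼P(·|s,a)}[max_{a'} Qᵏ(s',a')]] and f(k) = E_{(s,a)∼D}[Qᵏ(s,a)]. Then f(k+1) − f(k) = (E_{(s,a)∼D}[r(s,a)] − (1−γ)·f(k)) + γ·E_{(s,a)∼D, s'∼P}[max_{a'} Qᵏ(s',a') − Qᵏ_avg], where under the stationarity assumption E_{(s,a)∼D, s'∼P}[E_{a'∼π_β(·|s')}[Qᵏ(s',a')]] = f(k). In particular, if f(k) ≤ E_{(s,a)∼D}[r(s,a)]/(1−γ), then f(k+1) ≥ f(k). -/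
/-- Decomposition of the change of the average dataset Q-value under a conservative
Bellman backup: `f(k+1) − f(k)` splits into a term comparing `f(k)` to the dataset
Monte-Carlo return and a nonnegative policy-improvement term; consequently if
`f(k) ≤ E_D[r]/(1−γ)` then `f(k+1) ≥ f(k)`. -/
theorem cql_f_decomposition {S A : Type*} [Fintype S] [Fintype A] [Nonempty A]
    (γ : ℝ) (hγ0 : 0 ≤ γ) (hγ1 : γ < 1)
    (r : S → A → ℝ)
    (P : S → A → S → ℝ) (hP0 : ∀ s a s', 0 ≤ P s a s') (hP1 : ∀ s a, ∑ s', P s a s' = 1)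
    (πβ : S → A → ℝ) (hπ0 : ∀ s a, 0 ≤ πβ s a) (hπ1 : ∀ s, ∑ a, πβ s a = 1)
    (D : S → A → ℝ) (hD0 : ∀ s a, 0 ≤ D s a) (hD1 : ∑ s, ∑ a, D s a = 1)
    (Qk : S → A → ℝ) (fk1 fk : ℝ)
    (hfk1 : fk1 = ∑ s, ∑ a, D s a * (r s a +
      γ * ∑ s', P s a s' * (Finset.univ.sup' Finset.univ_nonempty fun a' => Qk s' a')))
    (hfk : fk = ∑ s, ∑ a, D s a * Qk s a)
    -- stationarity of D under the behavior policy πβ: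
    (hstatQ : ∑ s, ∑ a, D s a * ∑ s', P s a s' * ∑ a', πβ s' a' * Qk s' a' = fk) :
    (fk1 - fk = ((∑ s, ∑ a, D s a * r s a) - (1 - γ) * fk)
        + γ * ((∑ s, ∑ a, D s a * ∑ s', P s a s' *
            (Finset.univ.sup' Finset.univ_nonempty fun a' => Qk s' a')) - fk))
    ∧ (fk ≤ (∑ s, ∑ a, D s a * r s a) / (1 - γ) → fk ≤ fk1) := by
  set M : ℝ := ∑ s, ∑ a, D s a * ∑ s', P s a s' *
      (Finset.univ.sup' Finset.univ_nonempty fun a' => Qk s' a') with hM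
  have hsplit : fk1 = (∑ s, ∑ a, D s a * r s a) + γ * M := by
    rw [hfk1, hM, Finset.mul_sum]
    rw [← Finset.sum_add_distrib]
    refine Finset.sum_congr rfl fun s _ => ?_
    rw [Finset.mul_sum, ← Finset.sum_add_distrib]
    refine Finset.sum_congr rfl fun a _ => ?_
    ring
  have hMfk : fk ≤ M := by
    rw [← hstatQ, hM]
    refine Finset.sum_le_sum fun s _ => Finset.sum_le_sum fun a _ => ?_
    refine mul_le_mul_of_nonneg_left ?_ (hD0 s a)
    refine Finset.sum_le_sum fun s' _ => ?_
    refine mul_le_mul_of_nonneg_left ?_ (hP0 s a s')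
    calc ∑ a', πβ s' a' * Qk s' a'
        ≤ ∑ a', πβ s' a' * (Finset.univ.sup' Finset.univ_nonempty fun a' => Qk s' a') := by
          refine Finset.sum_le_sum fun a' _ => mul_le_mul_of_nonneg_left ?_ (hπ0 s' a')
          exact Finset.le_sup' (fun a' => Qk s' a') (Finset.mem_univ a')
      _ = _ := by rw [← Finset.sum_mul, hπ1, one_mul]
  refine ⟨by rw [hsplit]; ring, fun h => ?_⟩
  have hR : (1 - γ) * fk ≤ ∑ s, ∑ a, D s a * r s a := by
    have := (le_div_iff₀ (by linarith : (0:ℝ) < 1 - γ)).mp h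
    linarith
  nlinarith [mul_le_mul_of_nonneg_left hMfk hγ0]
end

section
/- Let A be a finite set, π_β a full-support probability mass function on A, and Q : A → ℝ. Define the soft-max distribution μ_Q(a) = π_β(a)·exp(Q(a)) / ∑_{a'} π_β(a')·exp(Q(a')). Then E_{μ_Q}[Q] − E_{π_β}[Q] = KL(μ_Q ‖ π_β) + KL(π_β ‖ μ_Q) ≥ 0. -/
/-- Under the soft-maximum distribution `μ_Q(a) = πβ(a)exp(Q(a))/Z`, the CQL
regularizer equals the symmetrized KL divergence between `μ_Q` and `πβ`, hence is
nonnegative. -/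
theorem cql_regularizer_eq_symm_kl {A : Type*} [Fintype A] [Nonempty A]
    (πβ : A → ℝ) (hβ0 : ∀ a, 0 < πβ a) (hβ1 : ∑ a, πβ a = 1)
    (Q : A → ℝ) (μ : A → ℝ)
    (hμ : ∀ a, μ a = πβ a * Real.exp (Q a) / ∑ a', πβ a' * Real.exp (Q a')) :
    ((∑ a, μ a * Q a) - ∑ a, πβ a * Q a
      = (∑ a, μ a * Real.log (μ a / πβ a)) + ∑ a, πβ a * Real.log (πβ a / μ a)) ∧
    0 ≤ (∑ a, μ a * Real.log (μ a / πβ a)) + ∑ a, πβ a * Real.log (πβ a / μ a) := by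
  set Z : ℝ := ∑ a', πβ a' * Real.exp (Q a') with hZdef
  have hZ : 0 < Z := Finset.sum_pos (fun a _ => mul_pos (hβ0 a) (Real.exp_pos _))
    Finset.univ_nonempty
  have hμpos : ∀ a, 0 < μ a := fun a => by
    rw [hμ a]; exact div_pos (mul_pos (hβ0 a) (Real.exp_pos _)) hZ
  have hμ1 : ∑ a, μ a = 1 := by
    simp only [hμ]
    rw [← Finset.sum_div, ← hZdef, div_self hZ.ne']
  have hlog : ∀ a, Real.log (μ a / πβ a) = Q a - Real.log Z := by
    intro a
    have : μ a / πβ a = Real.exp (Q a) / Z := by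
      rw [hμ a]; field_simp [(hβ0 a).ne']
    rw [this, Real.log_div (Real.exp_ne_zero _) hZ.ne', Real.log_exp]
  have hlog2 : ∀ a, Real.log (πβ a / μ a) = Real.log Z - Q a := by
    intro a
    rw [Real.log_div (hβ0 a).ne' (hμpos a).ne', ← neg_sub,
      ← Real.log_div (hμpos a).ne' (hβ0 a).ne', hlog a]
    ring
  constructor
  · simp only [hlog, hlog2, mul_sub]
    rw [Finset.sum_sub_distrib, Finset.sum_sub_distrib, ← Finset.sum_mul,
      ← Finset.sum_mul, hμ1, hβ1]
    ring
  · have key : ∀ a, 0 ≤ μ a * Real.log (μ a / πβ a) + πβ a * Real.log (πβ a / μ a) := by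
      intro a
      have h1 : Real.log (μ a / πβ a) = Real.log (μ a) - Real.log (πβ a) :=
        Real.log_div (hμpos a).ne' (hβ0 a).ne'
      have h2 : Real.log (πβ a / μ a) = Real.log (πβ a) - Real.log (μ a) :=
        Real.log_div (hβ0 a).ne' (hμpos a).ne'
      have : μ a * Real.log (μ a / πβ a) + πβ a * Real.log (πβ a / μ a)
          = (μ a - πβ a) * (Real.log (μ a) - Real.log (πβ a)) := by
        rw [h1, h2]; ring
      rw [this]
      rcases le_total (πβ a) (μ a) with h | h
      · exact mul_nonneg (by linarith) (by
          have := Real.log_le_log (hβ0 a) h; linarith)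
      · have := Real.log_le_log (hμpos a) h; nlinarith
    rw [← Finset.sum_add_distrib]
    exact Finset.sum_nonneg fun a _ => key a
end

section
/- Let (S, A, P, r, γ) be a finite MDP with γ ∈ [0,1), π_β a full-support behavior policy with stationary state-action distribution d_β, and let c(s,a) = α·(μ(a|s)/π_β(a|s) − 1) with α ≥ 0 and μ(·|s) a probability distribution for each s. Let Q̂^{π_β} be the fixed point of the penalized evaluation operator (BQ)(s,a) = r(s,a) + γ·E_{s'∼P, a'∼π_β}[Q(s',a')] − c(s,a). If μ(·|s) = π_β(·|s) for all s, then ∑_a π_β(a|s)c(s,a) = 0 at every state, and hence E_{(s,a)∼d_β}[Q̂^{π_β}(s,a)] = E_{(s,a)∼d_β}[Q^{π_β}(s,a)]; that is, CQL does not underestimate the behavior policy's value in expectation over the dataset distribution. -/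
lemma swap4 {α β γ δ M : Type*} [Fintype α] [Fintype β] [Fintype γ] [Fintype δ]
    [AddCommMonoid M] (f : α → β → γ → δ → M) :
    ∑ a, ∑ b, ∑ c, ∑ d, f a b c d = ∑ c, ∑ d, ∑ a, ∑ b, f a b c d := by
  calc ∑ a, ∑ b, ∑ c, ∑ d, f a b c d
      = ∑ a, ∑ c, ∑ b, ∑ d, f a b c d :=
        Finset.sum_congr rfl fun a _ => Finset.sum_comm
    _ = ∑ c, ∑ a, ∑ b, ∑ d, f a b c d := Finset.sum_comm
    _ = ∑ c, ∑ a, ∑ d, ∑ b, f a b c d :=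
        Finset.sum_congr rfl fun c _ => Finset.sum_congr rfl fun a _ => Finset.sum_comm
    _ = ∑ c, ∑ d, ∑ a, ∑ b, f a b c d :=
        Finset.sum_congr rfl fun c _ => Finset.sum_comm

lemma cql_aux {S A : Type*} [Fintype S] [Fintype A]
    (γ : ℝ) (P : S → A → S → ℝ) (πβ : S → A → ℝ) (dβ : S → A → ℝ)
    (hstat : ∀ s' a', ∑ s, ∑ a, dβ s a * (P s a s' * πβ s' a') = dβ s' a')
    (Q : S → A → ℝ) :
    ∑ s, ∑ a, dβ s a * (γ * ∑ s', P s a s' * ∑ a', πβ s' a' * Q s' a')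
      = γ * ∑ s, ∑ a, dβ s a * Q s a := by
  have key : ∑ s, ∑ a, dβ s a * (γ * ∑ s', P s a s' * ∑ a', πβ s' a' * Q s' a')
      = ∑ s', ∑ a', γ * ((∑ s, ∑ a, dβ s a * (P s a s' * πβ s' a')) * Q s' a') := by
    simp_rw [Finset.mul_sum, Finset.sum_mul]
    rw [swap4]
    refine Finset.sum_congr rfl fun s' _ => Finset.sum_congr rfl fun a' _ => ?_
    rw [Finset.mul_sum]
    refine Finset.sum_congr rfl fun s _ => ?_
    rw [Finset.mul_sum]
    exact Finset.sum_congr rfl fun a _ => by ring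
  rw [key]
  simp_rw [hstat, Finset.mul_sum]



/-- CQL does not underestimate the behavior policy's value in expectation over the
dataset distribution: when `μ = πβ`, the penalty `c(s,a) = α(μ(a|s)/πβ(a|s) − 1)`
has zero mean under `πβ` at every state, and the fixed point of the penalized
evaluation operator has the same `d_β`-averaged value as the true Q-function. -/
theorem cql_no_underestimation {S A : Type*} [Fintype S] [Fintype A]
    (γ : ℝ) (hγ0 : 0 ≤ γ) (hγ1 : γ < 1)
    (r : S → A → ℝ)
    (P : S → A → S → ℝ) (hP0 : ∀ s a s', 0 ≤ P s a s') (hP1 : ∀ s a, ∑ s', P s a s' = 1)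
    (πβ : S → A → ℝ) (hβ0 : ∀ s a, 0 < πβ s a) (hβ1 : ∀ s, ∑ a, πβ s a = 1)
    (dβ : S → A → ℝ) (hd0 : ∀ s a, 0 ≤ dβ s a) (hd1 : ∑ s, ∑ a, dβ s a = 1)
    (hstat : ∀ s' a', ∑ s, ∑ a, dβ s a * (P s a s' * πβ s' a') = dβ s' a')
    (α : ℝ) (hα : 0 ≤ α)
    (μ : S → A → ℝ) (hμ0 : ∀ s a, 0 ≤ μ s a) (hμ1 : ∀ s, ∑ a, μ s a = 1)
    (c : S → A → ℝ) (hc : ∀ s a, c s a = α * (μ s a / πβ s a - 1))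
    (Qhat Qβ : S → A → ℝ)
    (hQhat : ∀ s a, Qhat s a =
      r s a + γ * (∑ s', P s a s' * ∑ a', πβ s' a' * Qhat s' a') - c s a)
    (hQβ : ∀ s a, Qβ s a =
      r s a + γ * ∑ s', P s a s' * ∑ a', πβ s' a' * Qβ s' a')
    (hμβ : μ = πβ) :
    (∀ s, ∑ a, πβ s a * c s a = 0) ∧
    (∑ s, ∑ a, dβ s a * Qhat s a = ∑ s, ∑ a, dβ s a * Qβ s a) := by
  have hc0 : ∀ s a, c s a = 0 := by
    intro s a
    rw [hc, hμβ, div_self (hβ0 s a).ne', sub_self, mul_zero]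
  refine ⟨fun s => by simp [hc0], ?_⟩
  have hX : (1 - γ) * (∑ s, ∑ a, dβ s a * Qhat s a) = ∑ s, ∑ a, dβ s a * r s a := by
    have h1 : ∑ s, ∑ a, dβ s a * Qhat s a
        = (∑ s, ∑ a, dβ s a * r s a)
          + (∑ s, ∑ a, dβ s a * (γ * ∑ s', P s a s' * ∑ a', πβ s' a' * Qhat s' a')) := by
      rw [← Finset.sum_add_distrib]
      refine Finset.sum_congr rfl fun s _ => ?_
      rw [← Finset.sum_add_distrib]
      refine Finset.sum_congr rfl fun a _ => ?_
      rw [hQhat s a, hc0]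
      ring
    linear_combination h1 + cql_aux γ P πβ dβ hstat Qhat
  have hY : (1 - γ) * (∑ s, ∑ a, dβ s a * Qβ s a) = ∑ s, ∑ a, dβ s a * r s a := by
    have h1 : ∑ s, ∑ a, dβ s a * Qβ s a
        = (∑ s, ∑ a, dβ s a * r s a)
          + (∑ s, ∑ a, dβ s a * (γ * ∑ s', P s a s' * ∑ a', πβ s' a' * Qβ s' a')) := by
      rw [← Finset.sum_add_distrib]
      refine Finset.sum_congr rfl fun s _ => ?_
      rw [← Finset.sum_add_distrib]
      refine Finset.sum_congr rfl fun a _ => ?_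
      rw [hQβ s a]
      ring
    linear_combination h1 + cql_aux γ P πβ dβ hstat Qβ
  have hne : (1 - γ) ≠ 0 := by linarith
  exact mul_left_cancel₀ hne (hX.trans hY.symm)
end

section
/- Let γ ∈ [0,1) and let D be a probability distribution over S × A that is stationary under the behavior policy π_β (i.e., (s,a) ∼ D, s' ∼ P(·|s,a), a' ∼ π_β(·|s') implies (s',a') ∼ D). Suppose a sequence of functions Qᵏ satisfies Qᵏ⁺¹(s,a) = r(s,a) + γ·E_{s'}[max_{a'} Qᵏ(s',a')] for all k, with r ≥ 0 and Q⁰ ≡ 0. Then the sequence f(k) = E_D[Qᵏ(s,a)] is non-decreasing in k. -/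
/-- With no conservative penalty (α = 0), exact value iteration from zero
initialization with nonnegative rewards yields a non-decreasing average dataset
Q-value, where the dataset distribution `D` is stationary under the behavior
policy `πβ`. -/
theorem value_iteration_avg_monotone {S A : Type*} [Fintype S] [Fintype A] [Nonempty A]
    (γ : ℝ) (hγ0 : 0 ≤ γ) (hγ1 : γ < 1)
    (r : S → A → ℝ) (hr : ∀ s a, 0 ≤ r s a)
    (P : S → A → S → ℝ) (hP0 : ∀ s a s', 0 ≤ P s a s') (hP1 : ∀ s a, ∑ s', P s a s' = 1)
    (πβ : S → A → ℝ) (hπ0 : ∀ s a, 0 ≤ πβ s a) (hπ1 : ∀ s, ∑ a, πβ s a = 1)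
    (D : S → A → ℝ) (hD0 : ∀ s a, 0 ≤ D s a) (hD1 : ∑ s, ∑ a, D s a = 1)
    (hstat : ∀ s' a', ∑ s, ∑ a, D s a * (P s a s' * πβ s' a') = D s' a')
    (Q : ℕ → S → A → ℝ)
    (hQ0 : ∀ s a, Q 0 s a = 0)
    (hrec : ∀ k s a, Q (k + 1) s a = r s a +
      γ * ∑ s', P s a s' * (Finset.univ.sup' Finset.univ_nonempty fun a' => Q k s' a')) :
    Monotone fun k => ∑ s, ∑ a, D s a * Q k s a := by
  have key : ∀ k s a, Q k s a ≤ Q (k + 1) s a := by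
    intro k
    induction k with
    | zero =>
      intro s a
      rw [hQ0, hrec]
      have : 0 ≤ ∑ s', P s a s' * (Finset.univ.sup' Finset.univ_nonempty fun a' => Q 0 s' a') := by
        apply Finset.sum_nonneg
        intro s' _
        apply mul_nonneg (hP0 s a s')
        obtain ⟨a'⟩ := ‹Nonempty A›
        calc (0:ℝ) = Q 0 s' a' := (hQ0 s' a').symm
          _ ≤ _ := Finset.le_sup' _ (Finset.mem_univ a')
      nlinarith [hr s a]
    | succ k ih =>
      intro s a
      rw [hrec, hrec]
      have hsum : ∀ s', (Finset.univ.sup' Finset.univ_nonempty fun a' => Q k s' a')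
          ≤ (Finset.univ.sup' Finset.univ_nonempty fun a' => Q (k + 1) s' a') := by
        intro s'
        apply Finset.sup'_le
        intro a' _
        exact le_trans (ih s' a') (Finset.le_sup' _ (Finset.mem_univ a'))
      have : ∑ s', P s a s' * (Finset.univ.sup' Finset.univ_nonempty fun a' => Q k s' a')
          ≤ ∑ s', P s a s' * (Finset.univ.sup' Finset.univ_nonempty fun a' => Q (k + 1) s' a') :=
        Finset.sum_le_sum fun s' _ => mul_le_mul_of_nonneg_left (hsum s') (hP0 s a s')
      nlinarith
  apply monotone_nat_of_le_succ
  intro k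
  exact Finset.sum_le_sum fun s _ => Finset.sum_le_sum fun a _ =>
    mul_le_mul_of_nonneg_left (key k s a) (hD0 s a)
end
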